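/- Let G ⊆ O(n) be a compact subgroup acting transitively on the unit sphere of ℝ^n, and suppose the space Val^G of continuous translation-invariant G-invariant valuations is finite-dimensional with basis φ_1, …, φ_N. Then for each ψ ∈ Val^G there exist constants d_{ij} such that ∫_G ψ(A + gB) dg = Σ_{i,j} d_{ij} φ_i(A) φ_j(B) for all compact convex bodies A, B (additive kinematic formula). -/

import Mathlib

open Set MeasureTheory
open scoped Pointwise

/-- The action of a matrix (given as `Fin n → Fin n → ℝ`) on euclidean space. -/
noncomputable def matAct (n : ℕ) (g : Fin n → Fin n → ℝ) :
    EuclideanSpace ℝ (Fin n) →ₗ[ℝ] EuclideanSpace ℝ (Fin n) :=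
  Matrix.toEuclideanLin (Matrix.of g)

/-- Left multiplication of matrices. -/
def matMul (n : ℕ) (h g : Fin n → Fin n → ℝ) : Fin n → Fin n → ℝ :=
  fun i j => ∑ m, h i m * g m j

/-- The convex body `{x}`. -/
noncomputable def ptBody {n : ℕ} (x : EuclideanSpace ℝ (Fin n)) : ConvexBody (EuclideanSpace ℝ (Fin n)) :=
  ⟨{x}, convex_singleton x, isCompact_singleton, Set.singleton_nonempty x⟩

/-- The image of a convex body under the linear action of a matrix. -/
noncomputable def bodyMap {n : ℕ} (g : Fin n → Fin n → ℝ)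
    (K : ConvexBody (EuclideanSpace ℝ (Fin n))) : ConvexBody (EuclideanSpace ℝ (Fin n)) :=
  ⟨matAct n g '' K, K.convex.linear_image (matAct n g),
    K.isCompact.image (matAct n g).continuous_of_finiteDimensional,
    K.nonempty.image _⟩

/-- `ψ` is a continuous, translation-invariant, `G`-invariant valuation on convex bodies. -/
def IsValG (n : ℕ) (G : Set (Fin n → Fin n → ℝ))
    (ψ : ConvexBody (EuclideanSpace ℝ (Fin n)) → ℝ) : Prop :=
  Continuous ψ
    ∧ (∀ K x, ψ (K + ptBody x) = ψ K)
    ∧ (∀ K L M N : ConvexBody (EuclideanSpace ℝ (Fin n)),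
        (K : Set (EuclideanSpace ℝ (Fin n))) ∪ L = M →
        (K : Set (EuclideanSpace ℝ (Fin n))) ∩ L = N → ψ M + ψ N = ψ K + ψ L)
    ∧ (∀ g ∈ G, ∀ K, ψ (bodyMap g K) = ψ K)

namespace AKFAux

open Metric EMetric ENNReal
open scoped NNReal ENNReal


variable {E : Type*} [NormedAddCommGroup E] [NormedSpace ℝ E]

theorem inter_add_of_union_convex {K L C : Set E} (hKcl : IsClosed K) (hLcl : IsClosed L)
    (hU : Convex ℝ (K ∪ L)) (hC : Convex ℝ C) :
    (K ∩ L) + C = (K + C) ∩ (L + C) := by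
  apply Set.Subset.antisymm
  · rintro x hx
    obtain ⟨p, hp, c, hc, rfl⟩ := Set.mem_add.1 hx
    exact ⟨Set.add_mem_add hp.1 hc, Set.add_mem_add hp.2 hc⟩
  · rintro x ⟨hx1, hx2⟩
    obtain ⟨k, hk, c1, hc1, hkc⟩ := Set.mem_add.1 hx1
    obtain ⟨l, hl, c2, hc2, hlc⟩ := Set.mem_add.1 hx2
    have hγ : Continuous fun t : ℝ => (1 - t) • k + t • l := by continuity
    have hcover : Icc (0:ℝ) 1 ⊆ (fun t : ℝ => (1 - t) • k + t • l) ⁻¹' K ∪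
        (fun t : ℝ => (1 - t) • k + t • l) ⁻¹' L := by
      intro t ht
      exact hU (Set.mem_union_left _ hk) (Set.mem_union_right _ hl)
        (by linarith [ht.2]) ht.1 (by ring)
    obtain ⟨t, htI, htK, htL⟩ :=
      isPreconnected_closed_iff.1 isPreconnected_Icc _ _ (hKcl.preimage hγ) (hLcl.preimage hγ)
        hcover ⟨0, ⟨le_refl _, zero_le_one⟩, by simpa using hk⟩
        ⟨1, ⟨zero_le_one, le_refl _⟩, by simpa using hl⟩
    have hmem : ((1 - t) • k + t • l) + ((1 - t) • c1 + t • c2) = x := by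
      have h1 : ((1 - t) • k + t • l) + ((1 - t) • c1 + t • c2)
          = (1 - t) • (k + c1) + t • (l + c2) := by
        simp only [smul_add]; abel
      rw [h1, hkc, hlc]
      exact Convex.combo_self (by ring) x
    exact Set.mem_add.2 ⟨_, ⟨htK, htL⟩, _,
      hC hc1 hc2 (by linarith [htI.2]) htI.1 (by ring), hmem⟩

theorem hausdorffEdist_add_right_le {s t : Set E} (hs : IsCompact s) (ht : IsCompact t)
    (hsne : s.Nonempty) (htne : t.Nonempty) (u : Set E) :
    hausdorffEdist (s + u) (t + u) ≤ hausdorffEdist s t := by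
  apply hausdorffEdist_le_of_mem_edist
  · rintro x hx
    obtain ⟨a, ha, b, hb, rfl⟩ := Set.mem_add.1 hx
    obtain ⟨y, hy, hye⟩ := ht.exists_infEdist_eq_edist htne a
    refine ⟨y + b, Set.add_mem_add hy hb, ?_⟩
    rw [edist_add_right, ← hye]
    exact infEdist_le_hausdorffEdist_of_mem ha
  · rintro x hx
    obtain ⟨a, ha, b, hb, rfl⟩ := Set.mem_add.1 hx
    obtain ⟨y, hy, hye⟩ := hs.exists_infEdist_eq_edist hsne a
    refine ⟨y + b, Set.add_mem_add hy hb, ?_⟩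
    rw [edist_add_right, ← hye, hausdorffEdist, hausdorffEDist_comm]
    exact infEdist_le_hausdorffEdist_of_mem ha

theorem hausdorffEdist_image_le {f : E → E} {c : ℝ≥0} (hf : LipschitzWith c f)
    {s t : Set E} (hs : IsCompact s) (ht : IsCompact t) (hsne : s.Nonempty) (htne : t.Nonempty) :
    hausdorffEdist (f '' s) (f '' t) ≤ (c : ℝ≥0∞) * hausdorffEdist s t := by
  apply hausdorffEdist_le_of_mem_edist
  · rintro x ⟨a, ha, rfl⟩
    obtain ⟨y, hy, hye⟩ := ht.exists_infEdist_eq_edist htne a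
    refine ⟨f y, Set.mem_image_of_mem f hy, ?_⟩
    refine (hf a y).trans (_root_.mul_le_mul_right ?_ (c : ℝ≥0∞))
    rw [← hye]
    exact infEdist_le_hausdorffEdist_of_mem ha
  · rintro x ⟨a, ha, rfl⟩
    obtain ⟨y, hy, hye⟩ := hs.exists_infEdist_eq_edist hsne a
    refine ⟨f y, Set.mem_image_of_mem f hy, ?_⟩
    refine (hf a y).trans (_root_.mul_le_mul_right ?_ (c : ℝ≥0∞))
    rw [← hye, hausdorffEdist, hausdorffEDist_comm]
    exact infEdist_le_hausdorffEdist_of_mem ha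

theorem cb_dist_add_right_le (A A' C : ConvexBody E) : dist (A + C) (A' + C) ≤ dist A A' := by
  rw [dist_edist, dist_edist]
  refine ENNReal.toReal_mono (edist_ne_top A A') ?_
  rw [← ConvexBody.hausdorffEdist_coe, ← ConvexBody.hausdorffEdist_coe,
    ConvexBody.coe_add, ConvexBody.coe_add]
  exact hausdorffEdist_add_right_le A.isCompact A'.isCompact A.nonempty A'.nonempty _

theorem cb_dist_add_left_le (C A A' : ConvexBody E) : dist (C + A) (C + A') ≤ dist A A' := by
  rw [add_comm C A, add_comm C A']
  exact cb_dist_add_right_le A A' C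

theorem lipschitz_addBody (A : ConvexBody E) : LipschitzWith 1 (fun K : ConvexBody E => A + K) := by
  apply LipschitzWith.of_dist_le_mul
  intro K K'
  rw [NNReal.coe_one, one_mul, add_comm A K, add_comm A K']
  exact cb_dist_add_right_le K K' A


theorem matAct_mul (n : ℕ) (a b : Fin n → Fin n → ℝ) (x : EuclideanSpace ℝ (Fin n)) :
    matAct n (matMul n a b) x = matAct n a (matAct n b x) := by
  have h : Matrix.of (matMul n a b) = Matrix.of a * Matrix.of b := by
    ext i j; simp [matMul, Matrix.mul_apply]
  simp [matAct, h, Matrix.toEuclideanLin_apply, Matrix.mulVec_mulVec]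

theorem matAct_id (n : ℕ) (x : EuclideanSpace ℝ (Fin n)) :
    matAct n (fun i j => if i = j then (1:ℝ) else 0) x = x := by
  have h : (Matrix.of (fun i j => if i = j then (1:ℝ) else 0) : Matrix (Fin n) (Fin n) ℝ) = 1 := by
    ext i j; simp [Matrix.one_apply]
  simp [matAct, h, Matrix.toEuclideanLin_apply, Matrix.one_mulVec]

theorem coe_bodyMap {n : ℕ} (g : Fin n → Fin n → ℝ) (K : ConvexBody (EuclideanSpace ℝ (Fin n))) :
    ((bodyMap g K) : Set (EuclideanSpace ℝ (Fin n))) = matAct n g '' K := rfl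

theorem bodyMap_add {n : ℕ} (g : Fin n → Fin n → ℝ) (K L : ConvexBody (EuclideanSpace ℝ (Fin n))) :
    bodyMap g (K + L) = bodyMap g K + bodyMap g L := by
  apply ConvexBody.ext
  show matAct n g '' ((K : Set _) + (L : Set _)) = matAct n g '' K + matAct n g '' L
  exact Set.image_add (matAct n g)

theorem bodyMap_comp {n : ℕ} (a b : Fin n → Fin n → ℝ) (K : ConvexBody (EuclideanSpace ℝ (Fin n))) :
    bodyMap (matMul n a b) K = bodyMap a (bodyMap b K) := by
  apply ConvexBody.ext
  show matAct n (matMul n a b) '' (K : Set _) = matAct n a '' (matAct n b '' (K : Set _))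
  rw [← Set.image_comp]
  exact Set.image_congr fun x _ => matAct_mul n a b x

theorem bodyMap_id {n : ℕ} (K : ConvexBody (EuclideanSpace ℝ (Fin n))) :
    bodyMap (fun i j => if i = j then (1:ℝ) else 0) K = K := by
  apply ConvexBody.ext
  show matAct n (fun i j => if i = j then (1:ℝ) else 0) '' (K : Set _) = (K : Set _)
  rw [Set.image_congr fun x _ => matAct_id n x]
  exact Set.image_id _

theorem bodyMap_pt {n : ℕ} (g : Fin n → Fin n → ℝ) (x : EuclideanSpace ℝ (Fin n)) :
    bodyMap g (ptBody x) = ptBody (matAct n g x) := by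
  apply ConvexBody.ext
  show matAct n g '' {x} = {matAct n g x}
  exact Set.image_singleton

theorem matMul_transpose_self {n : ℕ} {g : Fin n → Fin n → ℝ}
    (h : Matrix.of g * (Matrix.of g).transpose = 1) :
    matMul n (fun i j => g j i) g = fun i j => if i = j then (1:ℝ) else 0 := by
  have h' := mul_eq_one_comm.mp h
  funext i j
  have h2 : matMul n (fun i j => g j i) g i j
      = ((Matrix.of g).transpose * Matrix.of g) i j := by
    simp [matMul, Matrix.mul_apply, Matrix.transpose_apply]
  rw [h2, h', Matrix.one_apply]

theorem matMul_self_transpose {n : ℕ} {g : Fin n → Fin n → ℝ}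
    (h : Matrix.of g * (Matrix.of g).transpose = 1) :
    matMul n g (fun i j => g j i) = fun i j => if i = j then (1:ℝ) else 0 := by
  funext i j
  have h2 : matMul n g (fun i j => g j i) i j
      = (Matrix.of g * (Matrix.of g).transpose) i j := by
    simp [matMul, Matrix.mul_apply, Matrix.transpose_apply]
  rw [h2, h, Matrix.one_apply]

theorem matMul_id_left {n : ℕ} (g : Fin n → Fin n → ℝ) :
    matMul n (fun i j => if i = j then (1:ℝ) else 0) g = g := by
  funext i j
  simp [matMul]

theorem matMul_id_right {n : ℕ} (g : Fin n → Fin n → ℝ) :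
    matMul n g (fun i j => if i = j then (1:ℝ) else 0) = g := by
  funext i j
  simp [matMul]

theorem matMul_assoc {n : ℕ} (a b c : Fin n → Fin n → ℝ) :
    matMul n (matMul n a b) c = matMul n a (matMul n b c) := by
  funext i j
  simp only [matMul, Finset.sum_mul, Finset.mul_sum, mul_assoc]
  exact Finset.sum_comm

theorem matAct_inj {n : ℕ} {g : Fin n → Fin n → ℝ}
    (h : Matrix.of g * (Matrix.of g).transpose = 1) :
    Function.Injective (matAct n g) := by
  intro x y hxy
  have h2 := congrArg (matAct n (fun i j => g j i)) hxy
  rwa [← matAct_mul, ← matAct_mul, matMul_transpose_self h, matAct_id, matAct_id] at h2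

noncomputable def matL (n : ℕ) :
    (Fin n → Fin n → ℝ) →ₗ[ℝ] (EuclideanSpace ℝ (Fin n) →L[ℝ] EuclideanSpace ℝ (Fin n)) :=
  (LinearMap.toContinuousLinearMap.toLinearMap.comp
    (Matrix.toEuclideanLin (𝕜 := ℝ) (m := Fin n) (n := Fin n)).toLinearMap :
      Matrix (Fin n) (Fin n) ℝ →ₗ[ℝ] _)

theorem matL_apply {n : ℕ} (g : Fin n → Fin n → ℝ) (x : EuclideanSpace ℝ (Fin n)) :
    matL n g x = matAct n g x := rfl

theorem continuous_matL (n : ℕ) : Continuous (fun g : Fin n → Fin n → ℝ => matL n g) :=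
  (matL n).continuous_of_finiteDimensional

theorem continuous_matMulPair {n : ℕ} {X : Type*} [TopologicalSpace X]
    {f g : X → (Fin n → Fin n → ℝ)} (hf : Continuous f) (hg : Continuous g) :
    Continuous fun x => matMul n (f x) (g x) := by
  apply continuous_pi; intro i; apply continuous_pi; intro j
  apply continuous_finset_sum; intro m _
  exact ((continuous_apply m).comp ((continuous_apply i).comp hf)).mul
    ((continuous_apply j).comp ((continuous_apply m).comp hg))

theorem continuous_transpose (n : ℕ) :
    Continuous fun g : Fin n → Fin n → ℝ => (fun i j => g j i : Fin n → Fin n → ℝ) :=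
  continuous_pi fun i => continuous_pi fun j => (continuous_apply i).comp (continuous_apply j)

theorem dist_bodyMap_le {n : ℕ} (g g' : Fin n → Fin n → ℝ)
    (B : ConvexBody (EuclideanSpace ℝ (Fin n))) {R : ℝ} (hR0 : 0 ≤ R)
    (hR : ∀ x ∈ (B : Set (EuclideanSpace ℝ (Fin n))), ‖x‖ ≤ R) :
    dist (bodyMap g B) (bodyMap g' B) ≤ ‖matL n g - matL n g'‖ * R := by
  have hb : hausdorffEdist ((bodyMap g B : Set (EuclideanSpace ℝ (Fin n)))) (bodyMap g' B)
      ≤ ENNReal.ofReal (‖matL n g - matL n g'‖ * R) := by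
    have key : ∀ a ∈ (B : Set (EuclideanSpace ℝ (Fin n))),
        edist (matAct n g a) (matAct n g' a) ≤ ENNReal.ofReal (‖matL n g - matL n g'‖ * R) := by
      intro a ha
      rw [edist_dist]
      apply ENNReal.ofReal_le_ofReal
      rw [dist_eq_norm]
      have h1 : matAct n g a - matAct n g' a = (matL n g - matL n g') a := by
        rw [ContinuousLinearMap.sub_apply, matL_apply, matL_apply]
      rw [h1]
      exact ((matL n g - matL n g').le_opNorm a).trans
        (mul_le_mul_of_nonneg_left (hR a ha) (norm_nonneg _))
    apply hausdorffEdist_le_of_mem_edist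
    · rintro x ⟨a, ha, rfl⟩
      exact ⟨matAct n g' a, ⟨a, ha, rfl⟩, key a ha⟩
    · rintro x ⟨a, ha, rfl⟩
      exact ⟨matAct n g a, ⟨a, ha, rfl⟩, by rw [edist_comm]; exact key a ha⟩
  rw [hausdorffEdist, ConvexBody.hausdorffEdist_coe] at hb
  rw [dist_edist]
  calc (edist (bodyMap g B) (bodyMap g' B)).toReal
      ≤ (ENNReal.ofReal (‖matL n g - matL n g'‖ * R)).toReal :=
        ENNReal.toReal_mono ENNReal.ofReal_ne_top hb
    _ = ‖matL n g - matL n g'‖ * R :=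
        ENNReal.toReal_ofReal (mul_nonneg (norm_nonneg _) hR0)

theorem dist_bodyMap_body_le {n : ℕ} (g : Fin n → Fin n → ℝ)
    (B B' : ConvexBody (EuclideanSpace ℝ (Fin n))) :
    dist (bodyMap g B) (bodyMap g B') ≤ ‖matL n g‖ * dist B B' := by
  have hlip : LipschitzWith ‖matL n g‖₊ (matAct n g) := by
    have := (matL n g).lipschitz
    exact this
  have hb : hausdorffEdist ((bodyMap g B : Set (EuclideanSpace ℝ (Fin n)))) (bodyMap g B')
      ≤ (‖matL n g‖₊ : ℝ≥0∞) * hausdorffEdist (B : Set (EuclideanSpace ℝ (Fin n))) B' :=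
    hausdorffEdist_image_le hlip B.isCompact B'.isCompact B.nonempty B'.nonempty
  rw [hausdorffEdist, ConvexBody.hausdorffEdist_coe, ConvexBody.hausdorffEdist_coe] at hb
  rw [dist_edist, dist_edist]
  calc (edist (bodyMap g B) (bodyMap g B')).toReal
      ≤ ((‖matL n g‖₊ : ℝ≥0∞) * edist B B').toReal :=
        ENNReal.toReal_mono (ENNReal.mul_ne_top ENNReal.coe_ne_top (edist_ne_top B B')) hb
    _ = ‖matL n g‖ * (edist B B').toReal := by
        rw [ENNReal.toReal_mul, ENNReal.coe_toReal, coe_nnnorm]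

theorem continuous_bodyMap {n : ℕ} (B : ConvexBody (EuclideanSpace ℝ (Fin n))) :
    Continuous fun g : Fin n → Fin n → ℝ => bodyMap g B := by
  obtain ⟨R, hRpos, hR⟩ := B.isBounded.exists_pos_norm_le
  rw [Metric.continuous_iff]
  intro g₀ ε hε
  obtain ⟨δ, hδ, hδ'⟩ := Metric.continuous_iff.1 (continuous_matL n) g₀ (ε / R)
    (div_pos hε hRpos)
  refine ⟨δ, hδ, fun g hg => ?_⟩
  have h1 : dist (bodyMap g B) (bodyMap g₀ B) ≤ ‖matL n g - matL n g₀‖ * R :=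
    dist_bodyMap_le g g₀ B hRpos.le hR
  have h2 : ‖matL n g - matL n g₀‖ * R < (ε / R) * R := by
    apply mul_lt_mul_of_pos_right _ hRpos
    rw [← dist_eq_norm]
    exact hδ' g hg
  calc dist (bodyMap g B) (bodyMap g₀ B) ≤ ‖matL n g - matL n g₀‖ * R := h1
    _ < (ε / R) * R := h2
    _ = ε := div_mul_cancel₀ ε hRpos.ne'

section Meas

variable {n : ℕ} {G : Set (Fin n → Fin n → ℝ)} (ν : Measure (Fin n → Fin n → ℝ))
  [IsProbabilityMeasure ν]

theorem ae_memG (hsupp : ν Gᶜ = 0) : ∀ᵐ g ∂ν, g ∈ G := by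
  rw [MeasureTheory.ae_iff]
  exact hsupp

theorem integrable_cont (hGcpt : IsCompact G) (hsupp : ν Gᶜ = 0)
    {F : (Fin n → Fin n → ℝ) → ℝ} (hF : Continuous F) : Integrable F ν := by
  obtain ⟨C, hC⟩ := hGcpt.exists_bound_of_continuousOn hF.continuousOn
  refine ⟨hF.aestronglyMeasurable, HasFiniteIntegral.of_bounded (C := C) ?_⟩
  filter_upwards [ae_memG ν hsupp] with g hg using hC g hg

theorem prod_null (hsupp : ν Gᶜ = 0) : (ν.prod ν) ((G ×ˢ G)ᶜ) = 0 := by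
  have hsub : (G ×ˢ G)ᶜ ⊆ (Gᶜ ×ˢ (univ : Set (Fin n → Fin n → ℝ)))
      ∪ ((univ : Set (Fin n → Fin n → ℝ)) ×ˢ Gᶜ) := by
    intro p hp
    simp only [Set.mem_union, Set.mem_prod, Set.mem_compl_iff, Set.mem_univ, and_true, true_and]
    by_contra hc
    push_neg at hc
    exact hp ⟨hc.1, hc.2⟩
  apply measure_mono_null hsub
  apply measure_union_null <;> rw [Measure.prod_prod] <;> simp [hsupp]

theorem ae_memG_prod (hsupp : ν Gᶜ = 0) : ∀ᵐ p ∂(ν.prod ν), p.1 ∈ G ∧ p.2 ∈ G := by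
  rw [MeasureTheory.ae_iff]
  apply measure_mono_null _ (prod_null ν hsupp)
  intro p hp
  simp only [Set.mem_setOf_eq, not_and_or] at hp
  simp only [Set.mem_compl_iff, Set.mem_prod, not_and_or]
  exact hp

theorem integrable_cont_prod (hGcpt : IsCompact G) (hsupp : ν Gᶜ = 0)
    {F : (Fin n → Fin n → ℝ) × (Fin n → Fin n → ℝ) → ℝ} (hF : Continuous F) :
    Integrable F (ν.prod ν) := by
  obtain ⟨C, hC⟩ := (hGcpt.prod hGcpt).exists_bound_of_continuousOn hF.continuousOn
  refine ⟨hF.aestronglyMeasurable, HasFiniteIntegral.of_bounded (C := C) ?_⟩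
  filter_upwards [ae_memG_prod ν hsupp] with p hp using hC p ⟨hp.1, hp.2⟩

theorem lint (hinv : ∀ h ∈ G, Measure.map (matMul n h) ν = ν) {h : Fin n → Fin n → ℝ}
    (hh : h ∈ G) {F : (Fin n → Fin n → ℝ) → ℝ} (hF : Continuous F) :
    ∫ g, F (matMul n h g) ∂ν = ∫ g, F g ∂ν := by
  have hc : Continuous (matMul n h) := by
    exact continuous_matMulPair continuous_const continuous_id
  conv_rhs => rw [← hinv h hh]
  rw [MeasureTheory.integral_map hc.aemeasurable
    (by rw [hinv h hh]; exact hF.aestronglyMeasurable)]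

theorem rint (hGcpt : IsCompact G) (hsupp : ν Gᶜ = 0)
    (hGone : (fun i j => if i = j then (1 : ℝ) else 0) ∈ G)
    (hGmul : ∀ g ∈ G, ∀ h ∈ G, matMul n g h ∈ G)
    (hGinv : ∀ g ∈ G, (fun i j => g j i) ∈ G)
    (hinv : ∀ h ∈ G, Measure.map (matMul n h) ν = ν)
    {F : (Fin n → Fin n → ℝ) → ℝ} (hF : Continuous F) {h : Fin n → Fin n → ℝ} (hh : h ∈ G) :
    ∫ g, F (matMul n g h) ∂ν = ∫ g, F g ∂ν := by
  -- the transpose map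
  set T : (Fin n → Fin n → ℝ) → (Fin n → Fin n → ℝ) := fun k => (fun i j => k j i) with hT
  have hTcont : Continuous T := continuous_transpose n
  have hTmem : ∀ k ∈ G, T k ∈ G := fun k hk => hGinv k hk
  -- key : ∀ u ∈ G, ∫ k, F (matMul n (T k) u) ∂ν = ∫ k, F (T k) ∂ν
  have key : ∀ u ∈ G, (∫ k, F (matMul n (T k) u) ∂ν) = ∫ k, F (T k) ∂ν := by
    intro u hu
    have hrw : ∀ k, matMul n (T k) u = T (matMul n (T u) k) := by
      intro k
      funext i j
      simp only [matMul, hT]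
      exact Finset.sum_congr rfl fun m _ => mul_comm _ _
    have h1 : (∫ k, F (matMul n (T k) u) ∂ν) = ∫ k, (F ∘ T) (matMul n (T u) k) ∂ν := by
      congr 1
      funext k
      rw [hrw k]
      rfl
    rw [h1, lint ν hinv (hTmem u hu) (hF.comp hTcont)]
    rfl

  have hgen : ∀ h' ∈ G, (∫ g, F (matMul n g h') ∂ν) = ∫ k, F (T k) ∂ν := by
    intro h' hh'
    set H : ((Fin n → Fin n → ℝ) × (Fin n → Fin n → ℝ)) → ℝ :=
      fun p => F (matMul n (T p.1) (matMul n p.2 h')) with hH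
    have hHcont : Continuous H :=
      hF.comp (continuous_matMulPair (hTcont.comp continuous_fst)
        (continuous_matMulPair continuous_snd continuous_const))
    have hHint : Integrable H (ν.prod ν) := integrable_cont_prod ν hGcpt hsupp hHcont
    have hswap : (∫ k, ∫ g, H (k, g) ∂ν ∂ν) = ∫ g, ∫ k, H (k, g) ∂ν ∂ν :=
      MeasureTheory.integral_integral_swap (by exact hHint)
    have hI1 : (∫ k, ∫ g, H (k, g) ∂ν ∂ν) = ∫ g, F (matMul n g h') ∂ν := by
      rw [MeasureTheory.integral_congr_ae (g := fun _ => ∫ g, F (matMul n g h') ∂ν) ?_]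
      · simp
      · filter_upwards [ae_memG ν hsupp] with k hk
        have h2 : ∀ g, H (k, g) = (fun u => F (matMul n u h')) (matMul n (T k) g) := by
          intro g
          simp only [hH, matMul_assoc]
        calc (∫ g, H (k, g) ∂ν) = ∫ g, (fun u => F (matMul n u h')) (matMul n (T k) g) ∂ν := by
              congr 1; funext g; exact h2 g
          _ = ∫ g, F (matMul n g h') ∂ν :=
              lint ν hinv (hTmem k hk)
                (hF.comp (continuous_matMulPair continuous_id continuous_const))
    have hI2 : (∫ g, ∫ k, H (k, g) ∂ν ∂ν) = ∫ k, F (T k) ∂ν := by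
      rw [MeasureTheory.integral_congr_ae (g := fun _ => ∫ k, F (T k) ∂ν) ?_]
      · simp
      · filter_upwards [ae_memG ν hsupp] with g hg
        exact key (matMul n g h') (hGmul g hg h' hh')
    rw [← hI1, hswap, hI2]
  have hId : (∫ g, F (matMul n g (fun i j => if i = j then (1:ℝ) else 0)) ∂ν) = ∫ g, F g ∂ν := by
    congr 1
    funext g
    rw [matMul_id_right]
  rw [hgen h hh, ← hgen _ hGone, hId]

end Meas

end AKFAux

open AKFAux in
set_option maxHeartbeats 1000000 in
/-- The additive kinematic formula for a compact group `G ⊆ O(n)` acting transitively on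
the sphere: if `φ_1, …, φ_N` is a basis of `Val^G`, then for every `ψ ∈ Val^G` there are
constants `d_{ij}` with `∫_G ψ(A + gB) dg = Σ_{i,j} d_{ij} φ_i(A) φ_j(B)`. -/
theorem stmt_15 (n N : ℕ) (hn : 0 < n)
    (G : Set (Fin n → Fin n → ℝ))
    (hGcpt : IsCompact G)
    (hGorth : ∀ g ∈ G, Matrix.of g * (Matrix.of g).transpose = 1)
    (hGone : (fun i j => if i = j then (1 : ℝ) else 0) ∈ G)
    (hGmul : ∀ g ∈ G, ∀ h ∈ G, matMul n g h ∈ G)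
    (hGinv : ∀ g ∈ G, (fun i j => g j i) ∈ G)
    (hGtrans : ∀ x y : EuclideanSpace ℝ (Fin n), ‖x‖ = 1 → ‖y‖ = 1 →
      ∃ g ∈ G, matAct n g x = y)
    (ν : Measure (Fin n → Fin n → ℝ)) [IsProbabilityMeasure ν]
    (hsupp : ν Gᶜ = 0)
    (hinv : ∀ h ∈ G, Measure.map (matMul n h) ν = ν)
    (φ : Fin N → ConvexBody (EuclideanSpace ℝ (Fin n)) → ℝ)
    (hφ : ∀ i, IsValG n G (φ i))
    (hφindep : ∀ c : Fin N → ℝ, (∀ K, ∑ i, c i * φ i K = 0) → ∀ i, c i = 0)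
    (hφspan : ∀ ψ, IsValG n G ψ → ∃ c : Fin N → ℝ, ∀ K, ψ K = ∑ i, c i * φ i K) :
    ∀ ψ, IsValG n G ψ → ∃ d : Fin N → Fin N → ℝ,
      ∀ A B : ConvexBody (EuclideanSpace ℝ (Fin n)),
        ∫ g, ψ (A + bodyMap g B) ∂ν = ∑ i, ∑ j, d i j * φ i A * φ j B := by
  intro ψ hψ
  obtain ⟨hψc, hψt, hψv, hψg⟩ := hψ
  -- continuity of the integrand in `g`
  have hbodyc : ∀ (A B : ConvexBody (EuclideanSpace ℝ (Fin n))),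
      Continuous fun g => ψ (A + bodyMap g B) := fun A B =>
    hψc.comp (((lipschitz_addBody A).continuous).comp (continuous_bodyMap B))
  have hint : ∀ (A B : ConvexBody (EuclideanSpace ℝ (Fin n))),
      Integrable (fun g => ψ (A + bodyMap g B)) ν := fun A B =>
    integrable_cont ν hGcpt hsupp (hbodyc A B)
  set Ψ : ConvexBody (EuclideanSpace ℝ (Fin n)) → ConvexBody (EuclideanSpace ℝ (Fin n)) → ℝ :=
    fun B A => ∫ g, ψ (A + bodyMap g B) ∂ν with hΨdef
  -- set-level union/intersection identities
  have hsetU : ∀ (K L M C : ConvexBody (EuclideanSpace ℝ (Fin n))),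
      (K : Set (EuclideanSpace ℝ (Fin n))) ∪ L = M →
      ((K + C : ConvexBody _) : Set (EuclideanSpace ℝ (Fin n))) ∪ (L + C)
        = ((M + C : ConvexBody _) : Set (EuclideanSpace ℝ (Fin n))) := by
    intro K L M C h
    simp only [ConvexBody.coe_add]
    rw [← Set.union_add, h]
  have hsetI : ∀ (K L M N' C : ConvexBody (EuclideanSpace ℝ (Fin n))),
      (K : Set (EuclideanSpace ℝ (Fin n))) ∪ L = M →
      (K : Set (EuclideanSpace ℝ (Fin n))) ∩ L = N' →
      ((K + C : ConvexBody _) : Set (EuclideanSpace ℝ (Fin n))) ∩ (L + C)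
        = ((N' + C : ConvexBody _) : Set (EuclideanSpace ℝ (Fin n))) := by
    intro K L M N' C hu hi
    have hUconv : Convex ℝ ((K : Set (EuclideanSpace ℝ (Fin n))) ∪ L) := by
      rw [hu]; exact M.convex
    simp only [ConvexBody.coe_add]
    rw [← inter_add_of_union_convex K.isClosed L.isClosed hUconv C.convex, hi]
  -- continuity in the `A` slot
  have hΨAcont : ∀ B, Continuous (Ψ B) := by
    intro B
    rw [Metric.continuous_iff]
    intro A₀ ε hε
    have hCcpt : IsCompact ((fun g => A₀ + bodyMap g B) '' G) :=
      hGcpt.image (((lipschitz_addBody A₀).continuous).comp (continuous_bodyMap B))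
    have hU := hCcpt.uniformContinuousAt_of_continuousAt ψ
      (fun a _ => hψc.continuousAt) (Metric.dist_mem_uniformity (half_pos hε))
    obtain ⟨δ, hδpos, hδ⟩ := Metric.mem_uniformity_dist.1 hU
    refine ⟨δ, hδpos, fun A hA => ?_⟩
    have hb : ∀ᵐ g ∂ν, ‖ψ (A + bodyMap g B) - ψ (A₀ + bodyMap g B)‖ ≤ ε/2 := by
      filter_upwards [ae_memG ν hsupp] with g hg
      have hd : dist (A₀ + bodyMap g B) (A + bodyMap g B) < δ := by
        calc dist (A₀ + bodyMap g B) (A + bodyMap g B) ≤ dist A₀ A :=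
              cb_dist_add_right_le A₀ A (bodyMap g B)
          _ = dist A A₀ := dist_comm _ _
          _ < δ := hA
      have hmem : A₀ + bodyMap g B ∈ (fun g => A₀ + bodyMap g B) '' G := ⟨g, hg, rfl⟩
      have h3 : dist (ψ (A₀ + bodyMap g B)) (ψ (A + bodyMap g B)) < ε/2 := hδ hd hmem
      rw [Real.dist_eq] at h3
      rw [Real.norm_eq_abs, abs_sub_comm]
      exact h3.le
    have hsub : Ψ B A - Ψ B A₀ = ∫ g, (ψ (A + bodyMap g B) - ψ (A₀ + bodyMap g B)) ∂ν :=
      (integral_sub (hint A B) (hint A₀ B)).symm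
    calc dist (Ψ B A) (Ψ B A₀) = ‖Ψ B A - Ψ B A₀‖ := dist_eq_norm _ _
      _ = ‖∫ g, (ψ (A + bodyMap g B) - ψ (A₀ + bodyMap g B)) ∂ν‖ := by rw [hsub]
      _ ≤ ε/2 * (ν Set.univ).toReal := norm_integral_le_of_norm_le_const hb
      _ < ε := by
          rw [measure_univ, ENNReal.toReal_one, mul_one]
          linarith
  -- continuity in the `B` slot
  have hΨBcont : ∀ A, Continuous fun B => Ψ B A := by
    intro A
    obtain ⟨L0, hL0⟩ := hGcpt.exists_bound_of_continuousOn (continuous_matL n).continuousOn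
    set L := max L0 1 with hLdef
    have hLpos : (0:ℝ) < L := lt_of_lt_of_le one_pos (le_max_right _ _)
    have hLb : ∀ g ∈ G, ‖matL n g‖ ≤ L := fun g hg => (hL0 g hg).trans (le_max_left _ _)
    rw [Metric.continuous_iff]
    intro B₀ ε hε
    have hCcpt : IsCompact ((fun g => A + bodyMap g B₀) '' G) :=
      hGcpt.image (((lipschitz_addBody A).continuous).comp (continuous_bodyMap B₀))
    have hU := hCcpt.uniformContinuousAt_of_continuousAt ψ
      (fun a _ => hψc.continuousAt) (Metric.dist_mem_uniformity (half_pos hε))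
    obtain ⟨δ, hδpos, hδ⟩ := Metric.mem_uniformity_dist.1 hU
    refine ⟨δ / L, div_pos hδpos hLpos, fun B hB => ?_⟩
    have hb : ∀ᵐ g ∂ν, ‖ψ (A + bodyMap g B) - ψ (A + bodyMap g B₀)‖ ≤ ε/2 := by
      filter_upwards [ae_memG ν hsupp] with g hg
      have hd : dist (A + bodyMap g B₀) (A + bodyMap g B) < δ := by
        calc dist (A + bodyMap g B₀) (A + bodyMap g B)
            ≤ dist (bodyMap g B₀) (bodyMap g B) :=
              cb_dist_add_left_le A (bodyMap g B₀) (bodyMap g B)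
          _ ≤ ‖matL n g‖ * dist B₀ B := dist_bodyMap_body_le g B₀ B
          _ ≤ L * dist B₀ B := mul_le_mul_of_nonneg_right (hLb g hg) dist_nonneg
          _ < L * (δ / L) := by
              apply mul_lt_mul_of_pos_left _ hLpos
              rw [dist_comm]
              exact hB
          _ = δ := by field_simp
      have hmem : A + bodyMap g B₀ ∈ (fun g => A + bodyMap g B₀) '' G := ⟨g, hg, rfl⟩
      have h3 : dist (ψ (A + bodyMap g B₀)) (ψ (A + bodyMap g B)) < ε/2 := hδ hd hmem
      rw [Real.dist_eq] at h3
      rw [Real.norm_eq_abs, abs_sub_comm]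
      exact h3.le
    have hsub : Ψ B A - Ψ B₀ A = ∫ g, (ψ (A + bodyMap g B) - ψ (A + bodyMap g B₀)) ∂ν :=
      (integral_sub (hint A B) (hint A B₀)).symm
    calc dist (Ψ B A) (Ψ B₀ A) = ‖Ψ B A - Ψ B₀ A‖ := dist_eq_norm _ _
      _ = ‖∫ g, (ψ (A + bodyMap g B) - ψ (A + bodyMap g B₀)) ∂ν‖ := by rw [hsub]
      _ ≤ ε/2 * (ν Set.univ).toReal := norm_integral_le_of_norm_le_const hb
      _ < ε := by
          rw [measure_univ, ENNReal.toReal_one, mul_one]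
          linarith
  -- `Ψ B` is a `G`-invariant valuation in the `A` slot
  have hΨval : ∀ B, IsValG n G (Ψ B) := by
    intro B
    refine ⟨hΨAcont B, ?_, ?_, ?_⟩
    · intro K x
      show (∫ g, ψ ((K + ptBody x) + bodyMap g B) ∂ν) = ∫ g, ψ (K + bodyMap g B) ∂ν
      congr 1
      funext g
      rw [add_right_comm]
      exact hψt (K + bodyMap g B) x
    · intro K L M N' hu hi
      have key : ∀ g, ψ (M + bodyMap g B) + ψ (N' + bodyMap g B)
          = ψ (K + bodyMap g B) + ψ (L + bodyMap g B) := fun g =>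
        hψv (K + bodyMap g B) (L + bodyMap g B) (M + bodyMap g B) (N' + bodyMap g B)
          (hsetU K L M (bodyMap g B) hu) (hsetI K L M N' (bodyMap g B) hu hi)
      show (∫ g, ψ (M + bodyMap g B) ∂ν) + (∫ g, ψ (N' + bodyMap g B) ∂ν)
          = (∫ g, ψ (K + bodyMap g B) ∂ν) + ∫ g, ψ (L + bodyMap g B) ∂ν
      rw [← integral_add (hint M B) (hint N' B), ← integral_add (hint K B) (hint L B)]
      exact integral_congr_ae (Filter.Eventually.of_forall key)
    · intro h hh K
      show (∫ g, ψ (bodyMap h K + bodyMap g B) ∂ν) = ∫ g, ψ (K + bodyMap g B) ∂ν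
      have hrw : ∀ g, bodyMap h (K + bodyMap (matMul n (fun i j => h j i) g) B)
          = bodyMap h K + bodyMap g B := by
        intro g
        rw [bodyMap_add, ← bodyMap_comp, ← matMul_assoc, matMul_self_transpose (hGorth h hh),
          matMul_id_left]
      calc (∫ g, ψ (bodyMap h K + bodyMap g B) ∂ν)
          = ∫ g, (fun u => ψ (K + bodyMap u B)) (matMul n (fun i j => h j i) g) ∂ν := by
            congr 1
            funext g
            rw [← hrw g, hψg h hh]
        _ = ∫ g, ψ (K + bodyMap g B) ∂ν := lint ν hinv (hGinv h hh) (hbodyc K B)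
  -- coefficients
  have hcex : ∀ B, ∃ cv : Fin N → ℝ, ∀ K, Ψ B K = ∑ i, cv i * φ i K :=
    fun B => hφspan (Ψ B) (hΨval B)
  choose c hc using hcex
  -- uniqueness of coefficients
  have huniq : ∀ a b : Fin N → ℝ, (∀ K, (∑ i, a i * φ i K) = ∑ i, b i * φ i K) → a = b := by
    intro a b hab
    funext i
    have h0 : a i - b i = 0 := by
      apply hφindep (fun i => a i - b i)
      intro K
      simp only [sub_mul, Finset.sum_sub_distrib]
      rw [hab K, sub_self]
    linarith
  -- translation invariance in the `B` slot
  have hΨtB : ∀ B x K, Ψ (B + ptBody x) K = Ψ B K := by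
    intro B x K
    show (∫ g, ψ (K + bodyMap g (B + ptBody x)) ∂ν) = ∫ g, ψ (K + bodyMap g B) ∂ν
    congr 1
    funext g
    rw [bodyMap_add, bodyMap_pt, ← add_assoc]
    exact hψt (K + bodyMap g B) (matAct n g x)
  -- valuation property in the `B` slot
  have hΨvB : ∀ K' L' M' N'' : ConvexBody (EuclideanSpace ℝ (Fin n)),
      (K' : Set (EuclideanSpace ℝ (Fin n))) ∪ L' = M' →
      (K' : Set (EuclideanSpace ℝ (Fin n))) ∩ L' = N'' →
      ∀ A, Ψ M' A + Ψ N'' A = Ψ K' A + Ψ L' A := by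
    intro K' L' M' N'' hu hi A
    have key : ∀ g ∈ G, ψ (A + bodyMap g M') + ψ (A + bodyMap g N'')
        = ψ (A + bodyMap g K') + ψ (A + bodyMap g L') := by
      intro g hg
      have hu' : ((bodyMap g K' : ConvexBody _) : Set (EuclideanSpace ℝ (Fin n)))
          ∪ (bodyMap g L') = (bodyMap g M' : ConvexBody _) := by
        show matAct n g '' K' ∪ matAct n g '' L' = matAct n g '' M'
        rw [← Set.image_union, hu]
      have hi' : ((bodyMap g K' : ConvexBody _) : Set (EuclideanSpace ℝ (Fin n)))
          ∩ (bodyMap g L') = (bodyMap g N'' : ConvexBody _) := by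
        show matAct n g '' K' ∩ matAct n g '' L' = matAct n g '' N''
        rw [← Set.image_inter (matAct_inj (hGorth g hg)), hi]
      have := hψv (bodyMap g K' + A) (bodyMap g L' + A) (bodyMap g M' + A) (bodyMap g N'' + A)
        (hsetU _ _ _ A hu') (hsetI _ _ _ _ A hu' hi')
      rw [add_comm (bodyMap g K') A, add_comm (bodyMap g L') A, add_comm (bodyMap g M') A,
        add_comm (bodyMap g N'') A] at this
      exact this
    show (∫ g, ψ (A + bodyMap g M') ∂ν) + (∫ g, ψ (A + bodyMap g N'') ∂ν)
        = (∫ g, ψ (A + bodyMap g K') ∂ν) + ∫ g, ψ (A + bodyMap g L') ∂ν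
    rw [← integral_add (hint A M') (hint A N''), ← integral_add (hint A K') (hint A L')]
    apply integral_congr_ae
    filter_upwards [ae_memG ν hsupp] with g hg using key g hg
  -- G-invariance in the `B` slot (uses right invariance of ν)
  have hΨgB : ∀ h ∈ G, ∀ B A, Ψ (bodyMap h B) A = Ψ B A := by
    intro h hh B A
    show (∫ g, ψ (A + bodyMap g (bodyMap h B)) ∂ν) = ∫ g, ψ (A + bodyMap g B) ∂ν
    have h1 : (∫ g, ψ (A + bodyMap g (bodyMap h B)) ∂ν)
        = ∫ g, (fun u => ψ (A + bodyMap u B)) (matMul n g h) ∂ν := by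
      congr 1
      funext g
      rw [← bodyMap_comp]
    rw [h1]
    exact rint ν hGcpt hsupp hGone hGmul hGinv hinv (hbodyc A B) hh
  -- the φ-coefficient vectors span ℝ^N
  have hspan : Submodule.span ℝ
      (Set.range (fun K : ConvexBody (EuclideanSpace ℝ (Fin n)) => (fun i => φ i K : Fin N → ℝ)))
      = ⊤ := by
    by_contra hne
    obtain ⟨f, hf0, hfbot⟩ := Submodule.exists_dual_map_eq_bot_of_lt_top
      (lt_top_iff_ne_top.2 hne) inferInstance
    set a : Fin N → ℝ := fun i => f (fun j => if i = j then 1 else 0) with hadef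
    have hfval : ∀ v : Fin N → ℝ, f v = ∑ i, v i * a i := by
      intro v
      conv_lhs => rw [pi_eq_sum_univ v]
      rw [map_sum]
      apply Finset.sum_congr rfl
      intro i _
      rw [f.map_smul, smul_eq_mul]
    have hker : ∀ K : ConvexBody (EuclideanSpace ℝ (Fin n)), f (fun i => φ i K) = 0 := by
      intro K
      have hmem : (fun i => φ i K : Fin N → ℝ) ∈ Submodule.span ℝ
          (Set.range (fun K : ConvexBody (EuclideanSpace ℝ (Fin n)) =>
            (fun i => φ i K : Fin N → ℝ))) :=
        Submodule.subset_span ⟨K, rfl⟩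
      have h2 : f (fun i => φ i K) ∈ (Submodule.span ℝ
          (Set.range (fun K : ConvexBody (EuclideanSpace ℝ (Fin n)) =>
            (fun i => φ i K : Fin N → ℝ)))).map f := Submodule.mem_map_of_mem hmem
      rwa [hfbot, Submodule.mem_bot] at h2
    have hzero : ∀ i, a i = 0 := by
      apply hφindep
      intro K
      have h2 := hker K
      rw [hfval] at h2
      calc (∑ i, a i * φ i K) = ∑ i, φ i K * a i := by
            apply Finset.sum_congr rfl
            intro i _
            ring
        _ = 0 := h2
    apply hf0
    apply LinearMap.ext
    intro v
    rw [hfval]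
    simp [hzero]
  -- coefficient functionals as finite combinations of evaluations
  have hcoef : ∀ i : Fin N, ∃ (m : ℕ) (α : Fin m → ℝ)
      (Ks : Fin m → ConvexBody (EuclideanSpace ℝ (Fin n))),
      ∀ B, c B i = ∑ j, α j * Ψ B (Ks j) := by
    intro i
    have hmem : (fun j => if j = i then (1:ℝ) else 0) ∈ Submodule.span ℝ
        (Set.range (fun K : ConvexBody (EuclideanSpace ℝ (Fin n)) =>
          (fun i => φ i K : Fin N → ℝ))) := by
      rw [hspan]; trivial
    obtain ⟨m, α, gsub, hsum⟩ := Submodule.mem_span_set'.1 hmem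
    have hKs : ∀ j : Fin m, ∃ K : ConvexBody (EuclideanSpace ℝ (Fin n)),
        (fun i => φ i K : Fin N → ℝ) = (gsub j : Fin N → ℝ) := fun j => (gsub j).2
    choose Ks hKsval using hKs
    refine ⟨m, α, Ks, ?_⟩
    intro B
    have hval : ∀ j i', φ i' (Ks j) = (gsub j : Fin N → ℝ) i' := fun j i' =>
      congr_fun (hKsval j) i'
    have key : ∀ i', (if i' = i then (1:ℝ) else 0) = ∑ j, α j * φ i' (Ks j) := by
      intro i'
      calc (if i' = i then (1:ℝ) else 0) = (∑ j, α j • (gsub j : Fin N → ℝ)) i' := by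
            rw [hsum]
        _ = ∑ j, α j * φ i' (Ks j) := by
            rw [Finset.sum_apply]
            exact Finset.sum_congr rfl fun j _ => by rw [Pi.smul_apply, smul_eq_mul, hval]
    calc c B i = ∑ i', c B i' * (if i' = i then (1:ℝ) else 0) := by
          simp [mul_ite, mul_one, mul_zero]
      _ = ∑ i', c B i' * ∑ j, α j * φ i' (Ks j) :=
          Finset.sum_congr rfl fun i' _ => by rw [key i']
      _ = ∑ i', ∑ j, c B i' * (α j * φ i' (Ks j)) :=
          Finset.sum_congr rfl fun i' _ => Finset.mul_sum _ _ _
      _ = ∑ j, α j * ∑ i', c B i' * φ i' (Ks j) := by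
          rw [Finset.sum_comm]
          refine Finset.sum_congr rfl fun j _ => ?_
          rw [Finset.mul_sum]
          exact Finset.sum_congr rfl fun i' _ => by ring
      _ = ∑ j, α j * Ψ B (Ks j) :=
          Finset.sum_congr rfl fun j _ => by rw [← hc B (Ks j)]
  -- each coefficient functional  -- each coefficient functional is itself a G-invariant valuation
  have hcval : ∀ i, IsValG n G (fun B => c B i) := by
    intro i
    obtain ⟨m, α, Ks, hformula⟩ := hcoef i
    refine ⟨?_, ?_, ?_, ?_⟩
    · have heq : (fun B => c B i) = fun B => ∑ j, α j * Ψ B (Ks j) := funext hformula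
      rw [heq]
      exact continuous_finset_sum _ fun j _ => continuous_const.mul (hΨBcont (Ks j))
    · intro B x
      have h1 : ∀ K, (∑ i', c (B + ptBody x) i' * φ i' K) = ∑ i', c B i' * φ i' K := by
        intro K
        rw [← hc, ← hc]
        exact hΨtB B x K
      exact congr_fun (huniq _ _ h1) i
    · intro K' L' M' N'' hu hi
      have h1 : ∀ A, (∑ i', (c M' i' + c N'' i') * φ i' A)
          = ∑ i', (c K' i' + c L' i') * φ i' A := by
        intro A
        simp only [add_mul, Finset.sum_add_distrib]
        rw [← hc, ← hc, ← hc, ← hc]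
        exact hΨvB K' L' M' N'' hu hi A
      exact congr_fun (huniq _ _ h1) i
    · intro h hh B
      have h1 : ∀ K, (∑ i', c (bodyMap h B) i' * φ i' K) = ∑ i', c B i' * φ i' K := by
        intro K
        rw [← hc, ← hc]
        exact hΨgB h hh B K
      exact congr_fun (huniq _ _ h1) i
  -- expand the coefficients in the basis
  choose d hd using fun i => hφspan (fun B => c B i) (hcval i)
  refine ⟨d, ?_⟩
  intro A B
  calc (∫ g, ψ (A + bodyMap g B) ∂ν) = Ψ B A := rfl
    _ = ∑ i, c B i * φ i A := hc B A
    _ = ∑ i, (∑ j, d i j * φ j B) * φ i A := by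
        apply Finset.sum_congr rfl
        intro i _
        rw [← hd i B]
    _ = ∑ i, ∑ j, d i j * φ i A * φ j B := by
        apply Finset.sum_congr rfl
        intro i _
        rw [Finset.sum_mul]
        apply Finset.sum_congr rfl
        intro j _
        ring
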